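/- arXiv:2112.05422 — 2 statements merged into one kernel-verified Lean document; each statement's English description precedes it below -/
import Mathlib

section
/- Let (V,d) be a finite metric space with exactly n ≥ 2 points, and suppose there is a Hamiltonian cycle on V of total length L (that is, a cyclic enumeration v_1,…,v_n of all n points with L = ∑_{i=1}^{n} d(v_i, v_{i+1}), indices taken mod n). Let l : V → ℝ be a function such that (i) for all distinct u, v ∈ V one has min(l(u), l(v)) ≤ d(u,v), and (ii) for all v ∈ V one has l(v) ≤ L/2. Then ∑_{v ∈ V} l(v) ≤ (1/2)·(⌈log₂ n⌉ + 1)·L. -/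
open Finset

/-- Shift invariance of the sum of a periodic function over a window of length `n`. -/
lemma rsl_shift (g : ℕ → ℝ) (n : ℕ) (hg : ∀ i, g (i + n) = g i) (a : ℕ) :
    ∑ i ∈ Finset.Ico a (a + n), g i = ∑ i ∈ Finset.range n, g i := by
  induction a with
  | zero => rw [Nat.zero_add, ← Nat.Ico_zero_eq_range]
  | succ a ih =>
    rcases Nat.eq_zero_or_pos n with h0 | h0
    · simp [h0]
    have h1 : ∑ i ∈ Ico a (a + 1 + n), g i = g a + ∑ i ∈ Ico (a + 1) (a + 1 + n), g i :=
      Finset.sum_eq_sum_Ico_succ_bot (by omega) g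
    have h2 : ∑ i ∈ Ico a (a + 1 + n), g i = ∑ i ∈ Ico a (a + n), g i + g (a + n) := by
      rw [show a + 1 + n = (a + n) + 1 by ring, Finset.sum_Ico_succ_top (by omega)]
    have h3 := hg a
    linarith

/-- Telescoping triangle inequality along a monotone reparametrization. -/
lemma rsl_tele {V : Type*} [MetricSpace V] (f : ℕ → V) (P : ℕ → ℕ) (hP : Monotone P) (m : ℕ) :
    ∑ t ∈ Finset.range m, dist (f (P t)) (f (P (t + 1))) ≤
      ∑ i ∈ Finset.Ico (P 0) (P m), dist (f i) (f (i + 1)) := by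
  induction m with
  | zero => simp
  | succ m ih =>
    rw [Finset.sum_range_succ]
    have hstep : dist (f (P m)) (f (P (m + 1))) ≤
        ∑ i ∈ Ico (P m) (P (m + 1)), dist (f i) (f (i + 1)) := by
      have h := dist_le_range_sum_dist (fun t => f (P m + t)) (P (m + 1) - P m)
      rw [Finset.sum_Ico_eq_sum_range]
      have hPm : P m + (P (m + 1) - P m) = P (m + 1) := by
        have := hP (show m ≤ m+1 by omega); omega
      simpa [hPm, add_assoc] using h
    have hsplit := Finset.sum_Ico_consecutive (fun i => dist (f i) (f (i + 1)))
      (hP (Nat.zero_le m)) (hP (show m ≤ m+1 by omega))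
    linarith

/-- Shortcutting lemma: a cyclic tour through positions `q 0 ≤ q 1 ≤ ⋯` on a periodic
walk `f` has total length at most the length of the full cycle. -/
lemma rsl_shortcut {V : Type*} [MetricSpace V] (f : ℕ → V) (n : ℕ) (hn : 1 ≤ n)
    (hf : ∀ i, f (i + n) = f i) (m : ℕ) [NeZero m] (q : Fin m → ℕ)
    (hq : Monotone q) (hqn : ∀ j, q j < n) :
    ∑ j : Fin m, dist (f (q j)) (f (q (j + 1))) ≤
      ∑ i ∈ Finset.range n, dist (f i) (f (i + 1)) := by
  have hm : 1 ≤ m := Nat.one_le_iff_ne_zero.mpr (NeZero.ne m)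
  set P : ℕ → ℕ := fun t => if h : t < m then q ⟨t, h⟩ else q 0 + n with hP
  have hPmono : Monotone P := by
    intro s t hst
    by_cases hs : s < m
    · by_cases ht : t < m
      · simpa [P, hs, ht] using hq (show (⟨s, hs⟩ : Fin m) ≤ ⟨t, ht⟩ from hst)
      · simp only [P, hs, ht, dif_pos, dif_neg, not_false_iff]
        have := hqn ⟨s, hs⟩; omega
    · have ht : ¬ t < m := by omega
      simp [P, hs, ht]
  have h1 : ∑ j : Fin m, dist (f (q j)) (f (q (j + 1))) =
      ∑ t ∈ Finset.range m, dist (f (P t)) (f (P (t + 1))) := by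
    rw [← Fin.sum_univ_eq_sum_range (fun t => dist (f (P t)) (f (P (t + 1)))) m]
    refine Finset.sum_congr rfl fun j _ => ?_
    have hPj : P j.val = q j := by simp [P, j.isLt]
    by_cases hj : j.val + 1 < m
    · have h2 : P (j.val + 1) = q ⟨j.val + 1, hj⟩ := by simp [P, hj]
      have h3 : (j + 1 : Fin m) = ⟨j.val + 1, hj⟩ := by
        apply Fin.ext
        rw [Fin.add_def]
        simp only [Fin.val_one']
        rw [Nat.mod_eq_of_lt (show 1 < m by omega)]
        exact Nat.mod_eq_of_lt hj
      rw [hPj, h2, h3]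
    · have hjm : j.val + 1 = m := by have := j.isLt; omega
      have h2 : P (j.val + 1) = q 0 + n := by simp [P, hjm]
      have h3 : (j + 1 : Fin m) = 0 := by
        apply Fin.ext
        rw [Fin.add_def]
        simp only [Fin.val_one', Fin.val_zero]
        rcases Nat.lt_or_ge 1 m with h | h
        · rw [Nat.mod_eq_of_lt h, hjm, Nat.mod_self]
        · have hm1 : m = 1 := by omega
          simp [hm1, Nat.mod_one]
      rw [hPj, h2, h3, hf (q 0)]
  have h3 : P 0 = q 0 := by
    have h0 : (⟨0, show 0 < m by omega⟩ : Fin m) = 0 := by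
      apply Fin.ext; simp
    show (if h : 0 < m then q ⟨0, h⟩ else q 0 + n) = q 0
    rw [dif_pos (show 0 < m by omega), h0]
  have h4 : P m = q 0 + n := by simp [P]
  rw [h1]
  calc ∑ t ∈ Finset.range m, dist (f (P t)) (f (P (t + 1)))
      ≤ ∑ i ∈ Finset.Ico (P 0) (P m), dist (f i) (f (i + 1)) := rsl_tele f P hPmono m
    _ = ∑ i ∈ Finset.range n, dist (f i) (f (i + 1)) := by
        rw [h3, h4]
        refine rsl_shift (fun i => dist (f i) (f (i + 1))) n (fun i => ?_) (q 0)
        show dist (f (i + n)) (f (i + n + 1)) = dist (f i) (f (i + 1))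
        rw [hf i, show i + n + 1 = (i + 1) + n by ring, hf (i + 1)]

/-- Counting/charging lemma: if each index in `[0,m)` is charged at most twice by `M`,
`b` is antitone and nonnegative, and `m ≤ 2k`, then twice the tail sum of `b` over
`[k, m)` is at most the total charged sum. -/
lemma rsl_counting (m k : ℕ) (hm2k : m ≤ 2 * k) (b : ℕ → ℝ)
    (hb0 : ∀ i, 0 ≤ b i) (hba : Antitone b) (M : Fin m → ℕ) (hMm : ∀ j, M j < m)
    (hfib : ∀ i, (Finset.univ.filter (fun j : Fin m => M j = i)).card ≤ 2) :
    2 * ∑ i ∈ Finset.Ico k m, b i ≤ ∑ j : Fin m, b (M j) := by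
  classical
  set c : ℕ → ℝ := fun i => ((Finset.univ.filter (fun j : Fin m => M j = i)).card : ℝ) with hc
  have hc0 : ∀ i, 0 ≤ c i := fun i => by positivity
  have hc2 : ∀ i, c i ≤ 2 := fun i => by
    have := hfib i
    simp only [c]
    exact_mod_cast this
  have hcsum : ∑ i ∈ Finset.range m, c i = m := by
    have := Finset.card_eq_sum_card_fiberwise
      (f := M) (s := Finset.univ) (t := Finset.range m)
      (fun j _ => Finset.mem_range.mpr (hMm j))
    simp only [c]
    rw [← Nat.cast_sum]
    rw [← this]
    simp
  have hfibsum : ∑ j : Fin m, b (M j) = ∑ i ∈ Finset.range m, c i * b i := by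
    rw [← Finset.sum_fiberwise_of_maps_to (g := M) (fun j _ => Finset.mem_range.mpr (hMm j))
      (fun j => b (M j))]
    refine Finset.sum_congr rfl fun i _ => ?_
    calc ∑ j ∈ Finset.univ.filter (fun j : Fin m => M j = i), b (M j)
        = ∑ _j ∈ Finset.univ.filter (fun j : Fin m => M j = i), b i :=
          Finset.sum_congr rfl fun j hj => by rw [(Finset.mem_filter.mp hj).2]
      _ = c i * b i := by rw [Finset.sum_const, nsmul_eq_mul]
  rcases le_or_gt m k with hkm | hkm
  · have : Finset.Ico k m = ∅ := Finset.Ico_eq_empty (by omega)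
    rw [this]
    simp only [Finset.sum_empty, mul_zero]
    rw [hfibsum]
    exact Finset.sum_nonneg fun i _ => mul_nonneg (hc0 i) (hb0 i)
  · -- k < m
    rw [hfibsum]
    have hsplit : ∑ i ∈ Finset.range m, c i * b i =
        ∑ i ∈ Finset.range k, c i * b i + ∑ i ∈ Finset.Ico k m, c i * b i := by
      rw [Finset.range_eq_Ico, ← Finset.sum_Ico_consecutive _ (Nat.zero_le k) (le_of_lt hkm),
        ← Finset.range_eq_Ico]
    have hcsplit : ∑ i ∈ Finset.range k, c i + ∑ i ∈ Finset.Ico k m, c i = m := by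
      rw [Finset.range_eq_Ico, Finset.sum_Ico_consecutive _ (Nat.zero_le k) (le_of_lt hkm),
        ← Finset.range_eq_Ico, hcsum]
    -- piecewise bounds against b k
    have h1 : ∀ i ∈ Finset.Ico k m, 2 * b i ≤ c i * b i + (2 - c i) * b k := by
      intro i hi
      rw [Finset.mem_Ico] at hi
      have hbk : b i ≤ b k := hba hi.1
      nlinarith [hc2 i, hc0 i, hb0 i]
    have h2 : ∀ i ∈ Finset.range k, c i * b k ≤ c i * b i := by
      intro i hi
      rw [Finset.mem_range] at hi
      exact mul_le_mul_of_nonneg_left (hba (le_of_lt hi)) (hc0 i)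
    have H1 : 2 * ∑ i ∈ Finset.Ico k m, b i ≤
        ∑ i ∈ Finset.Ico k m, c i * b i + (∑ i ∈ Finset.Ico k m, (2 - c i)) * b k := by
      rw [Finset.mul_sum, Finset.sum_mul, ← Finset.sum_add_distrib]
      exact Finset.sum_le_sum h1
    have H2 : (∑ i ∈ Finset.Ico k m, (2 - c i)) * b k ≤ ∑ i ∈ Finset.range k, c i * b i := by
      have hcard : ((Finset.Ico k m).card : ℝ) = (m : ℝ) - k := by
        rw [Nat.card_Ico, Nat.cast_sub (le_of_lt hkm)]
      have e1 : ∑ i ∈ Finset.Ico k m, (2 - c i) = 2 * ((m : ℝ) - k) - ∑ i ∈ Finset.Ico k m, c i := by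
        rw [Finset.sum_sub_distrib, Finset.sum_const, nsmul_eq_mul, hcard]
        ring
      have e2 : 2 * ((m : ℝ) - k) - ∑ i ∈ Finset.Ico k m, c i ≤ ∑ i ∈ Finset.range k, c i := by
        have hm2k' : (m : ℝ) ≤ 2 * k := by exact_mod_cast hm2k
        linarith [hcsplit]
      calc (∑ i ∈ Finset.Ico k m, (2 - c i)) * b k
          ≤ (∑ i ∈ Finset.range k, c i) * b k := by
            rw [e1]
            exact mul_le_mul_of_nonneg_right e2 (hb0 k)
        _ = ∑ i ∈ Finset.range k, c i * b k := by rw [Finset.sum_mul]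
        _ ≤ ∑ i ∈ Finset.range k, c i * b i := Finset.sum_le_sum h2
    linarith [hsplit]

/-- Main lemma, with the extra assumption that `l` is nonnegative. -/
theorem rsl_main {V : Type*} [MetricSpace V] [Fintype V] (n : ℕ) (hn : 2 ≤ n)
    (v : Fin n → V) (hv : Function.Bijective v)
    (L : ℝ) (hL : L = ∑ i : Fin n, dist (v i) (v (i + ⟨1, by omega⟩)))
    (l : V → ℝ) (hl0 : ∀ x, 0 ≤ l x)
    (hmin : ∀ u w : V, u ≠ w → min (l u) (l w) ≤ dist u w)
    (hhalf : ∀ x : V, l x ≤ L / 2) :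
    ∑ x : V, l x ≤ (1 / 2) * ((Nat.clog 2 n : ℝ) + 1) * L := by
  classical
  have hn0 : 0 < n := by omega
  -- the periodic walk along the cycle
  set f : ℕ → V := fun i => v ⟨i % n, Nat.mod_lt i hn0⟩ with hf_def
  have hfper : ∀ i, f (i + n) = f i := fun i => by simp [f, Nat.add_mod_right]
  have hfeq : ∀ i : Fin n, f i.val = v i := fun i => by
    simp only [f]
    congr 1
    exact Fin.ext (Nat.mod_eq_of_lt i.isLt)
  have hLr : L = ∑ i ∈ Finset.range n, dist (f i) (f (i + 1)) := by
    rw [hL, ← Fin.sum_univ_eq_sum_range (fun i => dist (f i) (f (i + 1))) n]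
    refine Finset.sum_congr rfl fun i _ => ?_
    have e2 : f (i.val + 1) = v (i + ⟨1, by omega⟩) := by
      simp only [f]
      congr 1
    rw [← hfeq i, ← e2]
  have hL0 : 0 ≤ L := by
    rw [hLr]; exact Finset.sum_nonneg fun _ _ => dist_nonneg
  -- sort the vertices by decreasing `l`-value
  set σ : Equiv.Perm (Fin n) := Tuple.sort (fun i => -(l (v i))) with hσ
  have hanti : ∀ i j : Fin n, i ≤ j → l (v (σ j)) ≤ l (v (σ i)) := by
    intro i j hij
    have := Tuple.monotone_sort (fun i => -(l (v i))) hij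
    simp only [Function.comp_apply, neg_le_neg_iff] at this
    exact this
  set b : ℕ → ℝ := fun i => if h : i < n then l (v (σ ⟨i, h⟩)) else 0 with hb
  have hb0 : ∀ i, 0 ≤ b i := by
    intro i; by_cases h : i < n <;> simp [b, h, hl0]
  have hbanti : Antitone b := by
    intro i j hij
    by_cases hj : j < n
    · have hi : i < n := by omega
      simp only [b, dif_pos hi, dif_pos hj]
      exact hanti ⟨i, hi⟩ ⟨j, hj⟩ hij
    · by_cases hi : i < n
      · simp only [b, dif_pos hi, dif_neg hj]
        exact hl0 _
      · simp [b, hi, hj]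
  have hsum : ∑ x : V, l x = ∑ i ∈ Finset.range n, b i := by
    rw [← Fin.sum_univ_eq_sum_range b n]
    have e1 : ∑ i : Fin n, b i.val = ∑ i : Fin n, l (v (σ i)) := by
      refine Finset.sum_congr rfl fun i _ => ?_
      simp only [b, dif_pos i.isLt]
    rw [e1, Equiv.sum_comp σ (fun i => l (v i))]
    exact (Fintype.sum_bijective v hv _ _ (fun i => rfl)).symm
  -- the key claim
  have claim : ∀ k : ℕ, 1 ≤ k → k < n →
      2 * ∑ i ∈ Finset.Ico k (min (2 * k) n), b i ≤ L := by
    intro k hk1 hkn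
    set m := min (2 * k) n with hm
    have hm2 : 2 ≤ m := le_min (by omega) hn
    have hmn : m ≤ n := min_le_right _ _
    have hm2k : m ≤ 2 * k := min_le_left _ _
    haveI : NeZero m := ⟨by omega⟩
    have hinj : Function.Injective (fun j : Fin m => σ (Fin.castLE hmn j)) :=
      σ.injective.comp (Fin.castLE_injective hmn)
    set T : Finset (Fin n) := Finset.univ.map ⟨_, hinj⟩ with hT
    have hTcard : T.card = m := by simp [T]
    have hTmem : ∀ i : Fin n, i ∈ T ↔ (σ.symm i).val < m := by
      intro i
      simp only [T, Finset.mem_map, Finset.mem_univ, true_and,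
        Function.Embedding.coeFn_mk]
      constructor
      · rintro ⟨j, rfl⟩
        rw [Equiv.symm_apply_apply]
        exact j.isLt
      · intro h
        refine ⟨⟨(σ.symm i).val, h⟩, ?_⟩
        have : Fin.castLE hmn ⟨(σ.symm i).val, h⟩ = σ.symm i := Fin.ext rfl
        rw [this, Equiv.apply_symm_apply]
    set e : Fin m → Fin n := fun j => ((T.orderIsoOfFin hTcard) j : Fin n) with he
    have hemem : ∀ j, e j ∈ T := fun j => ((T.orderIsoOfFin hTcard) j).2
    have heinj : Function.Injective e := fun a c hac =>
      (T.orderIsoOfFin hTcard).injective (Subtype.ext hac)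
    have hemono : Monotone fun j => (e j).val := by
      intro a c hac
      exact (T.orderIsoOfFin hTcard).monotone hac
    set r : Fin m → ℕ := fun j => (σ.symm (e j)).val with hr
    have hrm : ∀ j, r j < m := fun j => (hTmem (e j)).mp (hemem j)
    have hrinj : Function.Injective r := by
      intro a c hac
      exact heinj (σ.symm.injective (Fin.val_injective hac))
    set q : Fin m → ℕ := fun j => (e j).val with hq
    have hqn : ∀ j, q j < n := fun j => (e j).isLt
    have htour := rsl_shortcut f n (by omega) hfper m q hemono hqn
    rw [← hLr] at htour
    have hfq : ∀ j, f (q j) = v (e j) := fun j => hfeq (e j)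
    have hbr : ∀ j, l (v (e j)) = b (r j) := by
      intro j
      have h1 : r j < n := lt_of_lt_of_le (hrm j) hmn
      simp only [b, dif_pos h1]
      congr 2
      rw [show (⟨(σ.symm (e j)).val, h1⟩ : Fin n) = σ.symm (e j) from Fin.ext rfl]
      rw [Equiv.apply_symm_apply]
    set M : Fin m → ℕ := fun j => max (r j) (r (j + 1)) with hM
    have hMm : ∀ j, M j < m := fun j => max_lt (hrm j) (hrm (j + 1))
    have hedge : ∀ j : Fin m, b (M j) ≤ dist (f (q j)) (f (q (j + 1))) := by
      intro j
      have hne : v (e j) ≠ v (e (j + 1)) := by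
        intro h
        have heq := heinj (hv.injective h)
        have hval := congrArg Fin.val heq
        rw [Fin.add_def] at hval
        simp only [Fin.val_one'] at hval
        rw [Nat.mod_eq_of_lt (show 1 < m by omega)] at hval
        rcases Nat.lt_or_ge (j.val + 1) m with hlt | hge
        · rw [Nat.mod_eq_of_lt hlt] at hval; omega
        · have hjm : j.val + 1 = m := by have := j.isLt; omega
          rw [hjm, Nat.mod_self] at hval
          omega
      calc b (M j) ≤ min (l (v (e j))) (l (v (e (j + 1)))) := by
            rw [hbr j, hbr (j + 1)]
            exact le_min (hbanti (le_max_left _ _)) (hbanti (le_max_right _ _))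
        _ ≤ dist (v (e j)) (v (e (j + 1))) := hmin _ _ hne
        _ = dist (f (q j)) (f (q (j + 1))) := by rw [hfq j, hfq (j + 1)]
    have hfib : ∀ i, (Finset.univ.filter (fun j : Fin m => M j = i)).card ≤ 2 := by
      intro i
      have hsub : Finset.univ.filter (fun j : Fin m => M j = i) ⊆
          Finset.univ.filter (fun j : Fin m => r j = i) ∪
            Finset.univ.filter (fun j : Fin m => r (j + 1) = i) := by
        intro j hj
        simp only [Finset.mem_filter, Finset.mem_univ, true_and] at hj
        simp only [Finset.mem_union, Finset.mem_filter, Finset.mem_univ, true_and]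
        rcases max_choice (r j) (r (j + 1)) with h | h
        · left; rw [← h]; exact hj
        · right; rw [← h]; exact hj
      refine le_trans (Finset.card_le_card hsub)
        (le_trans (Finset.card_union_le _ _) ?_)
      have c1 : (Finset.univ.filter (fun j : Fin m => r j = i)).card ≤ 1 := by
        apply Finset.card_le_one.mpr
        intro a ha c hc
        simp only [Finset.mem_filter] at ha hc
        exact hrinj (ha.2.trans hc.2.symm)
      have c2 : (Finset.univ.filter (fun j : Fin m => r (j + 1) = i)).card ≤ 1 := by
        apply Finset.card_le_one.mpr
        intro a ha c hc
        simp only [Finset.mem_filter] at ha hc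
        have h2 := hrinj (ha.2.trans hc.2.symm)
        exact add_right_cancel h2
      omega
    have hcount := rsl_counting m k hm2k b hb0 hbanti M hMm hfib
    calc 2 * ∑ i ∈ Finset.Ico k m, b i
        ≤ ∑ j : Fin m, b (M j) := hcount
      _ ≤ ∑ j : Fin m, dist (f (q j)) (f (q (j + 1))) :=
          Finset.sum_le_sum fun j _ => hedge j
      _ ≤ L := htour
  -- dyadic iteration
  have hiter : ∀ j : ℕ, ∑ i ∈ Finset.Ico 1 (min (2 ^ j) n), b i ≤ j * (L / 2) := by
    intro j
    induction j with
    | zero =>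
      simp [min_eq_left (show 2 ^ 0 ≤ n by omega)]
    | succ j ih =>
      have hpow : 2 ^ j ≤ 2 ^ (j + 1) := Nat.pow_le_pow_right (by norm_num) (by omega)
      have hmono2 : min (2 ^ j) n ≤ min (2 ^ (j + 1)) n := by omega
      have h1le : 1 ≤ min (2 ^ j) n := le_min Nat.one_le_two_pow (by omega)
      rw [← Finset.sum_Ico_consecutive b h1le hmono2]
      by_cases hc : 2 ^ j < n
      · have heq : min (2 ^ j) n = 2 ^ j := min_eq_left (le_of_lt hc)
        have hclaim := claim (2 ^ j) Nat.one_le_two_pow hc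
        rw [show 2 * 2 ^ j = 2 ^ (j + 1) by ring] at hclaim
        rw [heq] at ih ⊢
        push_cast
        linarith
      · have heq : min (2 ^ j) n = n := min_eq_right (by omega)
        have heq2 : min (2 ^ (j + 1)) n = n := min_eq_right (by omega)
        rw [heq] at ih
        rw [heq, heq2, Finset.Ico_self, Finset.sum_empty, add_zero]
        push_cast
        linarith
  -- conclusion
  have hnK : n ≤ 2 ^ Nat.clog 2 n := Nat.le_pow_clog (by norm_num) n
  have hfinal := hiter (Nat.clog 2 n)
  rw [min_eq_right hnK] at hfinal
  have hb0n : b 0 ≤ L / 2 := by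
    simp only [b, dif_pos hn0]
    exact hhalf _
  have hsplit : ∑ i ∈ Finset.range n, b i = b 0 + ∑ i ∈ Finset.Ico 1 n, b i := by
    rw [Finset.range_eq_Ico, Finset.sum_eq_sum_Ico_succ_bot hn0]
  rw [hsum, hsplit]
  have hring : (Nat.clog 2 n : ℝ) * (L / 2) + L / 2 =
      1 / 2 * ((Nat.clog 2 n : ℝ) + 1) * L := by ring
  linarith

/-- **Rosenkrantz–Stearns–Lewis lemma.** Let `(V, d)` be a finite metric space with exactly
`n ≥ 2` points admitting a Hamiltonian cycle (a cyclic enumeration `v` of all points) of total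
length `L`. If `l : V → ℝ` satisfies `min (l u) (l v) ≤ d u v` for all distinct `u v` and
`l v ≤ L / 2` for all `v`, then `∑ v, l v ≤ (1/2) * (⌈log₂ n⌉ + 1) * L`. -/
theorem stmt_0 {V : Type*} [MetricSpace V] [Fintype V] (n : ℕ) (hn : 2 ≤ n)
    (hcard : Fintype.card V = n)
    (v : Fin n → V) (hv : Function.Bijective v)
    (L : ℝ) (hL : L = ∑ i : Fin n, dist (v i) (v (i + ⟨1, by omega⟩)))
    (l : V → ℝ)
    (hmin : ∀ u w : V, u ≠ w → min (l u) (l w) ≤ dist u w)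
    (hhalf : ∀ x : V, l x ≤ L / 2) :
    ∑ x : V, l x ≤ (1 / 2) * ((⌈Real.logb 2 (n : ℝ)⌉ : ℝ) + 1) * L := by
  have hL0 : 0 ≤ L := by
    rw [hL]; exact Finset.sum_nonneg fun _ _ => dist_nonneg
  have hcl : (⌈Real.logb 2 (n : ℝ)⌉ : ℝ) = (Nat.clog 2 n : ℝ) := by
    rw [show (2 : ℝ) = ((2 : ℕ) : ℝ) by norm_num,
      Real.ceil_logb_natCast (Nat.cast_nonneg n), Int.clog_natCast]
    simp
  rw [hcl]
  have hmin' : ∀ u w : V, u ≠ w → min (max (l u) 0) (max (l w) 0) ≤ dist u w := by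
    intro u w huw
    rw [← max_min_distrib_right (l u) (l w) 0]
    exact max_le (hmin u w huw) dist_nonneg
  have hhalf' : ∀ x : V, max (l x) 0 ≤ L / 2 := fun x =>
    max_le (hhalf x) (by linarith)
  have key := rsl_main n hn v hv L hL (fun x => max (l x) 0)
    (fun x => le_max_right _ _) hmin' hhalf'
  calc ∑ x : V, l x ≤ ∑ x : V, max (l x) 0 :=
        Finset.sum_le_sum fun x _ => le_max_left _ _
    _ ≤ (1 / 2) * ((Nat.clog 2 n : ℝ) + 1) * L := key
end

section
/- Fix n ≥ 3 and let K_n be the complete graph on the vertex set V = {1,…,n}, and let H be the finite set of all spanning trees of K_n. Let D be a probability distribution on nonnegative edge-cost vectors c : Sym2 V → ℝ≥0, and for T ∈ H define the error η(T,c) = c(T) − min_{T' ∈ H} c(T'), where c(T) = ∑_{e ∈ E(T)} c(e). Suppose there is η_max > 0 such that η(T,c) ≤ η_max for every T ∈ H and D-almost every c. Let ε, δ ∈ (0,1) and let m be an integer with m ≥ 2·ln(2|H|/δ)·η_max²/ε². Let C_1,…,C_m be independent random cost vectors each with law D, and let T_p be any measurable random element of H that minimizes the empirical error (1/m)·∑_{i=1}^{m}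 η(T, C_i) over T ∈ H. Then with probability at least 1 − δ, E_{c∼D}[η(T_p, c)] ≤ min_{T ∈ H} E_{c∼D}[η(T, c)] + ε. -/
/-!
For a fixed tree, the errors `η(T, C_i)` are i.i.d. with values in `[0, η_max]`, so by Hoeffding
their mean lies within `ε / 2` of `E[η(T, c)]` except with probability `2 exp (-m ε² / (2 η_max²))`.
The sample size makes `|H|` times this at most `δ`, so by a union bound all trees are `ε / 2`-accurate
simultaneously with probability at least `1 - δ`; on that event the empirical minimizer loses at
most `ε / 2 + ε / 2` against any tree.
-/

open MeasureTheory ProbabilityTheory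

/-- The cost of a spanning tree `T` with respect to an edge-cost vector `c`. -/
noncomputable def treeCost {n : ℕ} (c : Sym2 (Fin n) → ℝ) (T : SimpleGraph (Fin n)) : ℝ :=
  ∑ᶠ e ∈ T.edgeSet, c e

/-- The error of a spanning tree `T` with respect to an edge-cost vector `c`: the excess of
its cost over the minimum spanning tree cost (trees of the complete graph on `Fin n` are
exactly the trees on `Fin n`). -/
noncomputable def treeErr (n : ℕ) (T : SimpleGraph (Fin n)) (c : Sym2 (Fin n) → ℝ) : ℝ :=
  treeCost c T - ⨅ T' : {T' : SimpleGraph (Fin n) // T'.IsTree}, treeCost c T'.1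

section Hoeffding

variable {Z Ω : Type*} [MeasurableSpace Z] [MeasurableSpace Ω] {D : Measure Z} {P : Measure Ω}
  [IsProbabilityMeasure P] {m : ℕ} {X : Fin m → Ω → Z} {f : Z → ℝ} {a b : ℝ}

lemma measureReal_le_sum_sub_integral_le (hX_meas : ∀ i, Measurable (X i))
    (hX_indep : iIndepFun X P) (hX_law : ∀ i, P.map (X i) = D) (hf : Measurable f)
    (hfab : ∀ᵐ z ∂D, f z ∈ Set.Icc a b) {t : ℝ} (ht : 0 ≤ t) :
    P.real {ω | t ≤ ∑ i, (f (X i ω) - ∫ z, f z ∂D)} ≤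
      Real.exp (-2 * t ^ 2 / (m * (b - a) ^ 2)) := by
  have h_subG : ∀ i ∈ Finset.univ, HasSubgaussianMGF (fun ω ↦ f (X i ω) - ∫ z, f z ∂D)
      ((‖b - a‖₊ / 2) ^ 2) P := by
    intro i _
    have hlaw : ∫ ω, f (X i ω) ∂P = ∫ z, f z ∂D := by
      rw [← hX_law i, integral_map (hX_meas i).aemeasurable hf.aestronglyMeasurable]
    rw [← hlaw]
    refine hasSubgaussianMGF_of_mem_Icc (hf.comp (hX_meas i)).aemeasurable ?_
    rw [← hX_law i] at hfab
    exact ae_of_ae_map (hX_meas i).aemeasurable hfab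
  have h_indep : iIndepFun (fun i ω ↦ f (X i ω) - ∫ z, f z ∂D) P :=
    hX_indep.comp (fun _ z ↦ f z - ∫ z, f z ∂D) fun _ ↦ hf.sub_const _
  refine (HasSubgaussianMGF.measure_sum_ge_le_of_iIndepFun h_indep h_subG ht).trans_eq ?_
  congr 1
  simp only [Finset.sum_const, Finset.card_univ, Fintype.card_fin, nsmul_eq_mul]
  push_cast
  rw [show 2 * (m * (‖b - a‖ / 2) ^ 2) = m * (b - a) ^ 2 / 2 by
    rw [Real.norm_eq_abs, div_pow, sq_abs]; ring, div_div_eq_mul_div]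
  ring

lemma measureReal_le_mean_sub_integral_le (hX_meas : ∀ i, Measurable (X i))
    (hX_indep : iIndepFun X P) (hX_law : ∀ i, P.map (X i) = D) (hf : Measurable f)
    (hfab : ∀ᵐ z ∂D, f z ∈ Set.Icc a b) {s : ℝ} (hs : 0 ≤ s) :
    P.real {ω | s ≤ (1 / (m : ℝ)) * ∑ i, f (X i ω) - ∫ z, f z ∂D} ≤
      Real.exp (-2 * m * s ^ 2 / (b - a) ^ 2) := by
  rcases Nat.eq_zero_or_pos m with rfl | hm
  · simp
  have hmR : (0 : ℝ) < m := Nat.cast_pos.2 hm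
  have hset : {ω | s ≤ (1 / (m : ℝ)) * ∑ i, f (X i ω) - ∫ z, f z ∂D} =
      {ω | m * s ≤ ∑ i, (f (X i ω) - ∫ z, f z ∂D)} := by
    ext ω
    simp only [Set.mem_ofPred_eq, Finset.sum_sub_distrib, Finset.sum_const, Finset.card_univ,
      Fintype.card_fin, nsmul_eq_mul]
    rw [← mul_le_mul_iff_right₀ hmR, mul_sub, ← mul_assoc, mul_one_div_cancel hmR.ne', one_mul]
  have hexp : -2 * (m * s) ^ 2 / (m * (b - a) ^ 2) = -2 * m * s ^ 2 / (b - a) ^ 2 := by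
    rw [show -2 * (m * s) ^ 2 = m * (-2 * m * s ^ 2) by ring, mul_div_mul_left _ _ hmR.ne']
  rw [hset, ← hexp]
  exact measureReal_le_sum_sub_integral_le hX_meas hX_indep hX_law hf hfab (by positivity)

lemma measureReal_le_abs_mean_sub_integral_le (hX_meas : ∀ i, Measurable (X i))
    (hX_indep : iIndepFun X P) (hX_law : ∀ i, P.map (X i) = D) (hf : Measurable f)
    (hfab : ∀ᵐ z ∂D, f z ∈ Set.Icc a b) {s : ℝ} (hs : 0 ≤ s) :
    P.real {ω | s ≤ |(1 / (m : ℝ)) * ∑ i, f (X i ω) - ∫ z, f z ∂D|} ≤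
      2 * Real.exp (-2 * m * s ^ 2 / (b - a) ^ 2) := by
  have hupper := measureReal_le_mean_sub_integral_le hX_meas hX_indep hX_law hf hfab hs
  have hlower := measureReal_le_mean_sub_integral_le (f := fun z ↦ -f z) (a := -b) (b := -a)
    hX_meas hX_indep hX_law hf.neg
    (by filter_upwards [hfab] with z hz using ⟨neg_le_neg hz.2, neg_le_neg hz.1⟩) hs
  rw [neg_sub_neg] at hlower
  have hsplit : {ω | s ≤ |(1 / (m : ℝ)) * ∑ i, f (X i ω) - ∫ z, f z ∂D|} ⊆
      {ω | s ≤ (1 / (m : ℝ)) * ∑ i, f (X i ω) - ∫ z, f z ∂D} ∪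
        {ω | s ≤ (1 / (m : ℝ)) * ∑ i, -f (X i ω) - ∫ z, -f z ∂D} := by
    intro ω hω
    simp only [Set.mem_union, Set.mem_ofPred_eq, le_abs, Finset.sum_neg_distrib, integral_neg,
      neg_sub, mul_neg, sub_neg_eq_add, neg_add_eq_sub] at hω ⊢
    exact hω
  calc _ ≤ _ := measureReal_mono hsplit
    _ ≤ _ := measureReal_union_le _ _
    _ ≤ _ := by linarith

end Hoeffding

lemma le_iInf_add_of_le_of_abs_sub_lt {H : Type*} {R L : H → ℝ} {ĥ : H} {ε : ℝ}
    (hmin : ∀ h, R ĥ ≤ R h) (hdev : ∀ h, |R h - L h| < ε / 2) : L ĥ ≤ (⨅ h, L h) + ε := by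
  have : Nonempty H := ⟨ĥ⟩
  rw [← sub_le_iff_le_add]
  refine le_ciInf fun h ↦ ?_
  have := abs_lt.1 (hdev ĥ)
  have := abs_lt.1 (hdev h)
  linarith [hmin h]

section EmpiricalRiskMinimization

variable {H Z Ω : Type*} [Finite H] [MeasurableSpace Z] [MeasurableSpace Ω] {D : Measure Z}
  {P : Measure Ω} [IsProbabilityMeasure P] {m : ℕ} {X : Fin m → Ω → Z} {ℓ : H → Z → ℝ} {a b : ℝ}

lemma measureReal_exists_le_abs_mean_sub_integral_le (hX_meas : ∀ i, Measurable (X i))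
    (hX_indep : iIndepFun X P) (hX_law : ∀ i, P.map (X i) = D) (hℓ : ∀ h, Measurable (ℓ h))
    (hℓab : ∀ h, ∀ᵐ z ∂D, ℓ h z ∈ Set.Icc a b) {s : ℝ} (hs : 0 ≤ s) :
    P.real {ω | ∃ h, s ≤ |(1 / (m : ℝ)) * ∑ i, ℓ h (X i ω) - ∫ z, ℓ h z ∂D|} ≤
      Nat.card H * (2 * Real.exp (-2 * m * s ^ 2 / (b - a) ^ 2)) := by
  have := Fintype.ofFinite H
  rw [Set.ofPred_exists, Nat.card_eq_fintype_card, ← nsmul_eq_mul, ← Finset.card_univ,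
    ← Finset.sum_const]
  exact (measureReal_iUnion_fintype_le _).trans <| Finset.sum_le_sum fun h _ ↦
    measureReal_le_abs_mean_sub_integral_le hX_meas hX_indep hX_law (hℓ h) (hℓab h) hs

theorem ofReal_le_measure_integral_le_iInf_add (hX_meas : ∀ i, Measurable (X i))
    (hX_indep : iIndepFun X P) (hX_law : ∀ i, P.map (X i) = D) (hℓ : ∀ h, Measurable (ℓ h))
    (hℓab : ∀ h, ∀ᵐ z ∂D, ℓ h z ∈ Set.Icc a b) {ĥ : Ω → H}
    (hĥ : ∀ ω h, (1 / (m : ℝ)) * ∑ i, ℓ (ĥ ω) (X i ω) ≤ (1 / (m : ℝ)) * ∑ i, ℓ h (X i ω))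
    {ε : ℝ} (hε : 0 < ε) :
    ENNReal.ofReal (1 - Nat.card H * (2 * Real.exp (-(m * ε ^ 2 / (2 * (b - a) ^ 2))))) ≤
      P {ω | ∫ z, ℓ (ĥ ω) z ∂D ≤ (⨅ h, ∫ z, ℓ h z ∂D) + ε} := by
  set bad := {ω | ∃ h, ε / 2 ≤ |(1 / (m : ℝ)) * ∑ i, ℓ h (X i ω) - ∫ z, ℓ h z ∂D|}
  have hbad_meas : MeasurableSet bad := by
    simp only [bad, Set.ofPred_exists]
    exact MeasurableSet.iUnion fun h ↦ measurableSet_le measurable_const (by fun_prop)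
  have hbad := measureReal_exists_le_abs_mean_sub_integral_le hX_meas hX_indep hX_law hℓ hℓab
    (half_pos hε).le
  rw [show -2 * m * (ε / 2) ^ 2 / (b - a) ^ 2 = -(m * ε ^ 2 / (2 * (b - a) ^ 2)) by
    simp only [div_eq_mul_inv, mul_inv]; ring] at hbad
  have hgood : badᶜ ⊆ {ω | ∫ z, ℓ (ĥ ω) z ∂D ≤ (⨅ h, ∫ z, ℓ h z ∂D) + ε} := by
    intro ω hω
    simp only [bad, Set.mem_compl_iff, Set.mem_ofPred_eq, not_exists, not_le] at hω
    exact le_iInf_add_of_le_of_abs_sub_lt (hĥ ω) hω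
  calc ENNReal.ofReal (1 - Nat.card H * (2 * Real.exp (-(m * ε ^ 2 / (2 * (b - a) ^ 2)))))
      ≤ ENNReal.ofReal (P.real badᶜ) := by
        rw [probReal_compl_eq_one_sub hbad_meas]
        exact ENNReal.ofReal_le_ofReal (by linarith)
    _ = P badᶜ := ofReal_measureReal
    _ ≤ _ := measure_mono hgood

end EmpiricalRiskMinimization

section SpanningTrees

variable {n : ℕ}

lemma measurable_treeCost (T : SimpleGraph (Fin n)) :
    Measurable fun c : Sym2 (Fin n) → ℝ ↦ treeCost c T := by
  simp only [treeCost, finsum_mem_eq_finite_toFinset_sum _ (Set.toFinite T.edgeSet)]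
  exact Finset.measurable_sum _ fun e _ ↦ measurable_pi_apply e

lemma measurable_treeErr (T : SimpleGraph (Fin n)) : Measurable (treeErr n T) :=
  (measurable_treeCost T).sub (Measurable.iInf fun T' ↦ measurable_treeCost T'.1)

lemma treeErr_nonneg {T : SimpleGraph (Fin n)} (hT : T.IsTree) (c : Sym2 (Fin n) → ℝ) :
    0 ≤ treeErr n T c :=
  sub_nonneg.2 <| ciInf_le (Set.finite_range fun T' : {T' : SimpleGraph (Fin n) // T'.IsTree} ↦
    treeCost c T'.1).bddBelow ⟨T, hT⟩

end SpanningTrees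

lemma mul_exp_neg_le_of_log_div_le {K δ x : ℝ} (hK : 0 < K) (hδ : 0 < δ)
    (h : Real.log (K / δ) ≤ x) : K * Real.exp (-x) ≤ δ := by
  calc K * Real.exp (-x) ≤ K * Real.exp (-Real.log (K / δ)) := by gcongr
    _ = δ := by rw [Real.exp_neg, Real.exp_log (by positivity), inv_div, mul_div_cancel₀ _ hK.ne']

theorem stmt_7_general (n : ℕ)
    (D : Measure (Sym2 (Fin n) → ℝ)) [IsProbabilityMeasure D]
    (ηmax : ℝ) (hηmax : 0 < ηmax)
    (hbound : ∀ᵐ c ∂D, ∀ T : SimpleGraph (Fin n), T.IsTree → treeErr n T c ≤ ηmax)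
    (ε δ : ℝ) (hε : ε ∈ Set.Ioo (0 : ℝ) 1) (hδ : δ ∈ Set.Ioo (0 : ℝ) 1)
    (m : ℕ)
    (hm : 2 * Real.log (2 * (Nat.card {T : SimpleGraph (Fin n) // T.IsTree} : ℝ) / δ) *
        ηmax ^ 2 / ε ^ 2 ≤ (m : ℝ))
    (Ω : Type*) [MeasurableSpace Ω] (P : Measure Ω) [IsProbabilityMeasure P]
    (X : Fin m → Ω → (Sym2 (Fin n) → ℝ))
    (hX_meas : ∀ i, Measurable (X i))
    (hX_indep : iIndepFun X P)
    (hX_law : ∀ i, Measure.map (X i) P = D)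
    (Tp : Ω → SimpleGraph (Fin n))
    (hTp_tree : ∀ ω, (Tp ω).IsTree)
    (hTp_min : ∀ ω, ∀ T : SimpleGraph (Fin n), T.IsTree →
      (1 / (m : ℝ)) * ∑ i : Fin m, treeErr n (Tp ω) (X i ω) ≤
        (1 / (m : ℝ)) * ∑ i : Fin m, treeErr n T (X i ω)) :
    ENNReal.ofReal (1 - δ) ≤
      P {ω | ∫ c, treeErr n (Tp ω) c ∂D ≤
        (⨅ T : {T : SimpleGraph (Fin n) // T.IsTree}, ∫ c, treeErr n T.1 c ∂D) + ε} := by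
  have : Nonempty Ω := nonempty_of_isProbabilityMeasure P
  have : Nonempty {T : SimpleGraph (Fin n) // T.IsTree} :=
    ⟨⟨Tp (Classical.arbitrary Ω), hTp_tree _⟩⟩
  have hN : (0 : ℝ) < Nat.card {T : SimpleGraph (Fin n) // T.IsTree} := Nat.cast_pos.2 Nat.card_pos
  have hsample : Real.log (2 * Nat.card {T : SimpleGraph (Fin n) // T.IsTree} / δ) ≤
      m * ε ^ 2 / (2 * ηmax ^ 2) := by
    rw [div_le_iff₀ (by positivity [hε.1])] at hm
    rw [le_div_iff₀ (by positivity)]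
    linarith
  have hfail := mul_exp_neg_le_of_log_div_le (by positivity) hδ.1 hsample
  have herm := ofReal_le_measure_integral_le_iInf_add hX_meas hX_indep hX_law
    (ℓ := fun T : {T : SimpleGraph (Fin n) // T.IsTree} ↦ treeErr n T.1)
    (fun T ↦ measurable_treeErr T.1)
    (fun T ↦ by filter_upwards [hbound] with c hc using ⟨treeErr_nonneg T.2 c, hc T.1 T.2⟩)
    (ĥ := fun ω ↦ ⟨Tp ω, hTp_tree ω⟩) (fun ω T ↦ hTp_min ω T.1 T.2) hε.1
  refine le_trans (ENNReal.ofReal_le_ofReal ?_) herm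
  rw [sub_zero]
  linarith

/-- **PAC learnability of tree predictions.** Empirical risk minimization over the finite
class `H` of all spanning trees of `K_n`, using `m ≥ 2 ln(2|H|/δ) η_max² / ε²` i.i.d. samples
from `D`, returns with probability at least `1 − δ` a tree whose expected error is within `ε`
of the best expected error. -/
theorem stmt_7 (n : ℕ) (hn : 3 ≤ n)
    (D : Measure (Sym2 (Fin n) → ℝ)) [IsProbabilityMeasure D]
    (hpos : ∀ᵐ c ∂D, ∀ e : Sym2 (Fin n), 0 ≤ c e)
    (ηmax : ℝ) (hηmax : 0 < ηmax)
    (hbound : ∀ᵐ c ∂D, ∀ T : SimpleGraph (Fin n), T.IsTree → treeErr n T c ≤ ηmax)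
    (ε δ : ℝ) (hε : ε ∈ Set.Ioo (0 : ℝ) 1) (hδ : δ ∈ Set.Ioo (0 : ℝ) 1)
    (m : ℕ)
    (hm : 2 * Real.log (2 * (Nat.card {T : SimpleGraph (Fin n) // T.IsTree} : ℝ) / δ) *
        ηmax ^ 2 / ε ^ 2 ≤ (m : ℝ))
    (Ω : Type*) [MeasurableSpace Ω] (P : Measure Ω) [IsProbabilityMeasure P]
    (X : Fin m → Ω → (Sym2 (Fin n) → ℝ))
    (hX_meas : ∀ i, Measurable (X i))
    (hX_indep : iIndepFun X P)
    (hX_law : ∀ i, Measure.map (X i) P = D)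
    (Tp : Ω → SimpleGraph (Fin n))
    (hTp_meas : @Measurable Ω (SimpleGraph (Fin n)) _ ⊤ Tp)
    (hTp_tree : ∀ ω, (Tp ω).IsTree)
    (hTp_min : ∀ ω, ∀ T : SimpleGraph (Fin n), T.IsTree →
      (1 / (m : ℝ)) * ∑ i : Fin m, treeErr n (Tp ω) (X i ω) ≤
        (1 / (m : ℝ)) * ∑ i : Fin m, treeErr n T (X i ω)) :
    ENNReal.ofReal (1 - δ) ≤
      P {ω | ∫ c, treeErr n (Tp ω) c ∂D ≤
        (⨅ T : {T : SimpleGraph (Fin n) // T.IsTree}, ∫ c, treeErr n T.1 c ∂D) + ε} :=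
  stmt_7_general n D ηmax hηmax hbound ε δ hε hδ m hm Ω P X hX_meas hX_indep hX_law Tp hTp_tree
    hTp_min
end
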